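/- arXiv:2007.04753 — 3 statements merged into one kernel-verified Lean document; each statement's English description precedes it below -/
import Mathlib

section
/- For k₀ = 1 - e^{-α₀} with α₀ ≠ 0 and for all t with k₀e^{ct} < 1, the function x(t) = [ (1/(ck₀)) log((1-k₀)/(1-k₀e^{ct})) + 1/(e^{-ct}-k₀) - 1/(1-k₀) ] (e^{-ct} - k₀) satisfies x(0) = 0 and x'(t) = 1 + c(1 - x(t)) e^{α(t)}, where α(t) = -log(1 - k₀e^{ct}). -/
/-!
Put `D(s) = 1 - k₀ e^{cs}`, `u(s) = e^{-cs} - k₀ = e^{-cs} D(s)` and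
`w(s) = 1/(1 - k₀) - (1/(c k₀)) log ((1 - k₀)/D(s))`. Wherever `u ≠ 0` the given formula reads
`x = 1 - u w`, and this is variation of constants for the linear equation `y' = -1 - (c/D) y`
satisfied by `y = 1 - x`: `u` solves the homogeneous equation `u' = -(c/D) u`, and `w' = -1/u`.
Since `e^{α} = 1/D`, this is the claimed equation for `x`.
-/

open Real

theorem hasDerivAt_one_sub_mul_of_variation_of_constants {u w : ℝ → ℝ} {g t : ℝ}
    (hu : HasDerivAt u (-(g * u t)) t) (hw : HasDerivAt w (-(u t)⁻¹) t) (hut : u t ≠ 0) :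
    HasDerivAt (fun s => 1 - u s * w s) (1 + g * (u t * w t)) t :=
  ((hu.mul hw).const_sub 1).congr_deriv (by field_simp; ring)

section

variable (c k : ℝ) {t : ℝ}

theorem exp_neg_mul_sub_eq (s : ℝ) :
    exp (-(c * s)) - k = exp (-(c * s)) * (1 - k * exp (c * s)) := by
  rw [mul_sub, mul_one, mul_left_comm, ← exp_add, neg_add_cancel, exp_zero, mul_one]

theorem hasDerivAt_exp_neg_mul_sub (hD : 1 - k * exp (c * t) ≠ 0) :
    HasDerivAt (fun s => exp (-(c * s)) - k)
      (-(c / (1 - k * exp (c * t)) * (exp (-(c * t)) - k))) t := by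
  have h := (((hasDerivAt_id t).const_mul c).neg.exp).sub_const k
  refine h.congr_deriv ?_
  rw [exp_neg_mul_sub_eq]
  field_simp
  simp

theorem hasDerivAt_log_div_one_sub_mul_exp (hk₁ : 1 - k ≠ 0) (hD : 1 - k * exp (c * t) ≠ 0) :
    HasDerivAt (fun s => log ((1 - k) / (1 - k * exp (c * s))))
      (c * k * exp (c * t) / (1 - k * exp (c * t))) t := by
  have hE := ((hasDerivAt_id t).const_mul c).exp
  have h := ((hasDerivAt_const t (1 - k)).div ((hE.const_mul k).const_sub 1) hD).log
    (div_ne_zero hk₁ hD)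
  refine h.congr_deriv ?_
  simp only [Pi.div_apply, id]
  field_simp
  ring

theorem hasDerivAt_variation_factor (hc : c ≠ 0) (hk : k ≠ 0) (hk₁ : 1 - k ≠ 0)
    (hD : 1 - k * exp (c * t) ≠ 0) :
    HasDerivAt (fun s => 1 / (1 - k) - 1 / (c * k) * log ((1 - k) / (1 - k * exp (c * s))))
      (-(exp (-(c * t)) - k)⁻¹) t := by
  refine (((hasDerivAt_log_div_one_sub_mul_exp c k hk₁ hD).const_mul _).const_sub _).congr_deriv ?_
  rw [exp_neg_mul_sub_eq, exp_neg]
  field_simp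

end

theorem hamilton_x_solution (c α₀ : ℝ) (hc : 0 < c) (hα₀ : α₀ ≠ 0)
    (k₀ : ℝ) (hk₀ : k₀ = 1 - Real.exp (-α₀))
    (a : ℝ → ℝ) (ha : ∀ t, a t = -Real.log (1 - k₀ * Real.exp (c * t)))
    (x : ℝ → ℝ)
    (hx : ∀ t, x t =
      ((1 / (c * k₀)) * Real.log ((1 - k₀) / (1 - k₀ * Real.exp (c * t)))
        + 1 / (Real.exp (-(c * t)) - k₀) - 1 / (1 - k₀)) * (Real.exp (-(c * t)) - k₀)) :
    x 0 = 0 ∧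
    ∀ t, k₀ * Real.exp (c * t) < 1 →
      HasDerivAt x (1 + c * (1 - x t) * Real.exp (a t)) t := by
  have hk₁ : 1 - k₀ ≠ 0 := by rw [hk₀, sub_sub_cancel]; exact (exp_pos _).ne'
  have hk₀_ne : k₀ ≠ 0 := by rwa [hk₀, sub_ne_zero, ne_comm, Ne, exp_eq_one_iff, neg_eq_zero]
  refine ⟨by simp [hx], fun t ht => ?_⟩
  have hD : 1 - k₀ * exp (c * t) ≠ 0 := (sub_pos.2 ht).ne'
  have hu := hasDerivAt_exp_neg_mul_sub c k₀ hD
  have hut : exp (-(c * t)) - k₀ ≠ 0 := by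
    rw [exp_neg_mul_sub_eq]; exact mul_ne_zero (exp_pos _).ne' hD
  have hx_eq (s : ℝ) (hs : exp (-(c * s)) - k₀ ≠ 0) :
      x s = 1 - (exp (-(c * s)) - k₀) *
        (1 / (1 - k₀) - 1 / (c * k₀) * log ((1 - k₀) / (1 - k₀ * exp (c * s)))) := by
    rw [hx]; field_simp; ring
  have hx' := (hasDerivAt_one_sub_mul_of_variation_of_constants hu
    (hasDerivAt_variation_factor c k₀ hc.ne' hk₀_ne hk₁ hD) hut).congr_of_eventuallyEq
    (hu.continuousAt.eventually_ne hut |>.mono hx_eq)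
  refine hx'.congr_deriv ?_
  rw [ha, hx_eq t hut, exp_neg (log _), exp_log (sub_pos.2 ht)]
  ring
end

section
/- The map α₀ ↦ x_{α₀}(t) is strictly monotone increasing in the initial condition: if α₀ < α₁ and x_{α₀}, x_{α₁} are the solutions of the Hamilton system x' = 1 + c(1-x)e^α, α' = c(e^α - 1) with x(0) = 0 and respective initial conditions α(0) = α₀, α(0) = α₁, then x_{α₀}(t) < x_{α₁}(t) for all t > 0 while both remain below 1; consequently, the hitting times satisfy T_{α₀} > T_{α₁}. -/
/-!
The α-equation integrates explicitly: `e^{-α(t)} - 1 = (e^{-α(0)} - 1) e^{ct}`, so the α-components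
of the two solutions stay strictly ordered. The difference `D = x₁ - x₀` then solves the linear
equation `D' = c (1 - x₁) (e^{α₁} - e^{α₀}) - c e^{α₀} D`, whose forcing term is positive while
`x₁ < 1`; with the integrating factor `e^{α₀ + ct}` this gives `D > 0`. For the hitting times:
if `T₀ ≤ T₁`, then `x₁ < 1` on `[0, T₀)`, so `x₁(T₀) > x₀(T₀) ≥ 1`, while continuity forces
`x₁(T₀) ≤ 1`.
-/

open Real Set Filter Topology

lemma eq_mul_exp_of_hasDerivAt_const_mul {c : ℝ} {y : ℝ → ℝ}
    (hy : ∀ s, 0 ≤ s → HasDerivAt y (c * y s) s) {t : ℝ} (ht : 0 ≤ t) :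
    y t = y 0 * exp (c * t) := by
  have hder : ∀ s, 0 ≤ s → HasDerivAt (fun u => y u * exp (-(c * u))) 0 s := by
    intro s hs
    have hexp : HasDerivAt (fun u => exp (-(c * u))) (exp (-(c * s)) * -c) s := by
      simpa using (((hasDerivAt_id s).const_mul c).neg).exp
    exact ((hy s hs).mul hexp).congr_deriv (by ring)
  have hconst : y t * exp (-(c * t)) = y 0 * exp (-(c * 0)) :=
    constant_of_has_deriv_right_zero (fun s hs => (hder s hs.1).continuousAt.continuousWithinAt)
      (fun s hs => (hder s hs.1).hasDerivWithinAt) t ⟨ht, le_rfl⟩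
  rw [mul_zero, neg_zero, exp_zero, mul_one, exp_neg, ← div_eq_mul_inv,
    div_eq_iff (exp_pos _).ne'] at hconst
  exact hconst

section AlphaEquation

variable {c : ℝ} {a : ℝ → ℝ}

lemma exp_neg_sub_one_eq (ha : ∀ s, 0 ≤ s → HasDerivAt a (c * (exp (a s) - 1)) s)
    {t : ℝ} (ht : 0 ≤ t) : exp (-a t) - 1 = (exp (-a 0) - 1) * exp (c * t) := by
  refine eq_mul_exp_of_hasDerivAt_const_mul (y := fun u => exp (-a u) - 1) (fun s hs => ?_) ht
  refine (((ha s hs).fun_neg.exp).sub_const 1).congr_deriv ?_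
  rw [exp_neg]
  field_simp
  ring

lemma lt_of_hasDerivAt_exp_sub_one {a' : ℝ → ℝ}
    (ha : ∀ s, 0 ≤ s → HasDerivAt a (c * (exp (a s) - 1)) s)
    (ha' : ∀ s, 0 ≤ s → HasDerivAt a' (c * (exp (a' s) - 1)) s)
    (h0 : a 0 < a' 0) {t : ℝ} (ht : 0 ≤ t) : a t < a' t := by
  have hexp₀ : exp (-a' 0) < exp (-a 0) := exp_lt_exp.2 (neg_lt_neg h0)
  have hexp : exp (-a' t) < exp (-a t) := by
    have := exp_neg_sub_one_eq ha ht
    have := exp_neg_sub_one_eq ha' ht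
    nlinarith [exp_pos (c * t)]
  simpa using exp_lt_exp.1 hexp

end AlphaEquation

lemma pos_of_hasDerivAt_sub_mul {D P p q : ℝ → ℝ} {t : ℝ} (ht : 0 < t) (hD0 : D 0 = 0)
    (hD : ∀ s ∈ Icc 0 t, HasDerivAt D (q s - p s * D s) s)
    (hP : ∀ s ∈ Icc 0 t, HasDerivAt P (p s) s) (hq : ∀ s ∈ Ioo 0 t, 0 < q s) : 0 < D t := by
  -- `e^P` is an integrating factor
  have hder : ∀ s ∈ Icc 0 t, HasDerivAt (fun u => D u * exp (P u)) (q s * exp (P s)) s := by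
    intro s hs
    exact ((hD s hs).mul (hP s hs).exp).congr_deriv (by ring)
  have hmono : StrictMonoOn (fun u => D u * exp (P u)) (Icc 0 t) := by
    refine strictMonoOn_of_hasDerivWithinAt_pos (f' := fun s => q s * exp (P s))
      (convex_Icc 0 t)
      (fun s hs => (hder s hs).continuousAt.continuousWithinAt) (fun s hs => ?_) (fun s hs => ?_)
    · exact (hder s (interior_subset hs)).hasDerivWithinAt
    · rw [interior_Icc] at hs
      exact mul_pos (hq s hs) (exp_pos _)
  have := hmono ⟨le_rfl, ht.le⟩ ⟨ht.le, le_rfl⟩ ht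
  simp only [hD0, zero_mul] at this
  exact pos_of_mul_pos_left this (exp_pos _).le

lemma hamilton_x_lt_of_alpha_lt {c t : ℝ} {x₀ a₀ x₁ a₁ : ℝ → ℝ} (hc : 0 < c) (ht : 0 < t)
    (hx₀ : ∀ s, 0 ≤ s → HasDerivAt x₀ (1 + c * (1 - x₀ s) * exp (a₀ s)) s)
    (ha₀ : ∀ s, 0 ≤ s → HasDerivAt a₀ (c * (exp (a₀ s) - 1)) s)
    (hx₁ : ∀ s, 0 ≤ s → HasDerivAt x₁ (1 + c * (1 - x₁ s) * exp (a₁ s)) s)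
    (h0 : x₀ 0 = x₁ 0) (ha : ∀ s ∈ Ioo 0 t, a₀ s < a₁ s) (hx₁1 : ∀ s ∈ Ioo 0 t, x₁ s < 1) :
    x₀ t < x₁ t := by
  have hD : ∀ s ∈ Icc 0 t, HasDerivAt (fun u => x₁ u - x₀ u)
      (c * (1 - x₁ s) * (exp (a₁ s) - exp (a₀ s)) - c * exp (a₀ s) * (x₁ s - x₀ s)) s := by
    intro s hs
    exact ((hx₁ s hs.1).sub (hx₀ s hs.1)).congr_deriv (by ring)
  have hP : ∀ s ∈ Icc 0 t, HasDerivAt (fun u => a₀ u + c * u) (c * exp (a₀ s)) s := by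
    intro s hs
    exact ((ha₀ s hs.1).add ((hasDerivAt_id s).const_mul c)).congr_deriv (by ring)
  have hq : ∀ s ∈ Ioo 0 t, 0 < c * (1 - x₁ s) * (exp (a₁ s) - exp (a₀ s)) := fun s hs =>
    mul_pos (mul_pos hc (sub_pos.2 (hx₁1 s hs))) (sub_pos.2 (exp_lt_exp.2 (ha s hs)))
  exact sub_pos.1 <|
    pos_of_hasDerivAt_sub_mul (D := fun u => x₁ u - x₀ u) ht (sub_eq_zero.2 h0.symm) hD hP hq

/-- `sInf ∅ = 0`, so this is the hitting time only when `x` does reach `1` on `[0, ∞)`. -/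
noncomputable def hittingTime (x : ℝ → ℝ) : ℝ :=
  sInf {t : ℝ | 0 ≤ t ∧ 1 ≤ x t}

section HittingTime

variable {x : ℝ → ℝ}

lemma lt_one_of_lt_hittingTime {s : ℝ} (hs0 : 0 ≤ s) (hs : s < hittingTime x) : x s < 1 := by
  by_contra! h
  exact hs.not_ge (csInf_le ⟨0, fun _ hu => hu.1⟩ ⟨hs0, h⟩)

lemma exists_one_le_of_one_le_deriv {x' : ℝ → ℝ} (hx : ∀ s, 0 ≤ s → HasDerivAt x (x' s) s)
    (hx' : ∀ s, 0 ≤ s → x s < 1 → 1 ≤ x' s) (hx0 : 0 ≤ x 0) : ∃ t, 0 ≤ t ∧ 1 ≤ x t := by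
  by_contra! hlt
  have hmono : MonotoneOn (fun s => x s - s) (Icc 0 1) := by
    refine monotoneOn_of_hasDerivWithinAt_nonneg (f' := fun s => x' s - 1) (convex_Icc 0 1)
      (fun s hs => ((hx s hs.1).sub (hasDerivAt_id s)).continuousAt.continuousWithinAt)
      (fun s hs => ?_) (fun s hs => ?_)
    · rw [interior_Icc] at hs
      exact ((hx s hs.1.le).sub (hasDerivAt_id s)).hasDerivWithinAt
    · rw [interior_Icc] at hs
      exact sub_nonneg.2 (hx' s hs.1.le (hlt s hs.1.le))
  have := hmono ⟨le_rfl, zero_le_one⟩ ⟨zero_le_one, le_rfl⟩ zero_le_one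
  linarith [hlt 1 zero_le_one]

lemma hittingTime_mem (hcont : ContinuousOn x (Ici 0)) (hne : ∃ t, 0 ≤ t ∧ 1 ≤ x t) :
    0 ≤ hittingTime x ∧ 1 ≤ x (hittingTime x) := by
  have hclosed : IsClosed {t : ℝ | 0 ≤ t ∧ 1 ≤ x t} :=
    hcont.preimage_isClosed_of_isClosed isClosed_Ici isClosed_Ici
  exact hclosed.csInf_mem hne ⟨0, fun _ hu => hu.1⟩

lemma le_one_of_forall_lt_one {T : ℝ} (hT : 0 < T) (hcont : ContinuousAt x T)
    (h : ∀ s ∈ Ico 0 T, x s < 1) : x T ≤ 1 :=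
  le_of_tendsto (hcont.tendsto.mono_left nhdsWithin_le_nhds)
    (eventually_of_mem (Ico_mem_nhdsLT hT) fun s hs => (h s hs).le)

lemma hittingTime_mem_of_hamilton {c : ℝ} {a : ℝ → ℝ} (hc : 0 ≤ c) (hx0 : x 0 = 0)
    (hx : ∀ s, 0 ≤ s → HasDerivAt x (1 + c * (1 - x s) * exp (a s)) s) :
    0 < hittingTime x ∧ 1 ≤ x (hittingTime x) := by
  have hne : ∃ t, 0 ≤ t ∧ 1 ≤ x t :=
    exists_one_le_of_one_le_deriv hx
      (fun s _ hs => le_add_of_nonneg_right (by have := sub_pos.2 hs; positivity)) hx0.ge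
  obtain ⟨hT, hxT⟩ :=
    hittingTime_mem (fun s hs => (hx s hs).continuousAt.continuousWithinAt) hne
  refine ⟨hT.lt_of_ne ?_, hxT⟩
  rintro hT0
  norm_num [← hT0, hx0] at hxT

end HittingTime

theorem monotonicity_in_initial_condition (c α₀ α₁ : ℝ) (hc : 0 < c) (h01 : α₀ < α₁)
    (x₀ a₀ x₁ a₁ : ℝ → ℝ)
    (hx₀0 : x₀ 0 = 0) (ha₀0 : a₀ 0 = α₀) (hx₁0 : x₁ 0 = 0) (ha₁0 : a₁ 0 = α₁)
    (hx₀ : ∀ t, 0 ≤ t → HasDerivAt x₀ (1 + c * (1 - x₀ t) * Real.exp (a₀ t)) t)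
    (ha₀ : ∀ t, 0 ≤ t → HasDerivAt a₀ (c * (Real.exp (a₀ t) - 1)) t)
    (hx₁ : ∀ t, 0 ≤ t → HasDerivAt x₁ (1 + c * (1 - x₁ t) * Real.exp (a₁ t)) t)
    (ha₁ : ∀ t, 0 ≤ t → HasDerivAt a₁ (c * (Real.exp (a₁ t) - 1)) t) :
    (∀ t, 0 < t → (∀ s, 0 ≤ s → s ≤ t → x₀ s < 1 ∧ x₁ s < 1) → x₀ t < x₁ t) ∧
    sInf {t : ℝ | 0 ≤ t ∧ 1 ≤ x₁ t} < sInf {t : ℝ | 0 ≤ t ∧ 1 ≤ x₀ t} := by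
  have hcmp : ∀ t, 0 < t → (∀ s ∈ Ioo 0 t, x₁ s < 1) → x₀ t < x₁ t := fun t ht hx₁1 =>
    hamilton_x_lt_of_alpha_lt hc ht hx₀ ha₀ hx₁ (hx₀0.trans hx₁0.symm)
      (fun s hs => lt_of_hasDerivAt_exp_sub_one ha₀ ha₁ (ha₀0 ▸ ha₁0 ▸ h01) hs.1.le) hx₁1
  refine ⟨fun t ht h => hcmp t ht fun s hs => (h s hs.1.le hs.2.le).2, ?_⟩
  change hittingTime x₁ < hittingTime x₀
  obtain ⟨hT₀, hxT₀⟩ := hittingTime_mem_of_hamilton hc.le hx₀0 hx₀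
  by_contra! hT
  have hx₁lt : ∀ s ∈ Ico 0 (hittingTime x₀), x₁ s < 1 := fun s hs =>
    lt_one_of_lt_hittingTime hs.1 (hs.2.trans_le hT)
  have hlt : x₀ (hittingTime x₀) < x₁ (hittingTime x₀) :=
    hcmp _ hT₀ fun s hs => hx₁lt s (Ioo_subset_Ico_self hs)
  have hle : x₁ (hittingTime x₀) ≤ 1 :=
    le_one_of_forall_lt_one hT₀ (hx₁ _ hT₀.le).continuousAt hx₁lt
  linarith
end

section
/- Let f ∈ C²([0,1]) and x ∈ [0,1). For ζ_{N,x} binomial with parameters N - ⌊Nx⌋ - 1 and c/N, the nonlinear generator H_N(f)(x) = log E[exp(N(f(x + 1/N + ζ_{N,x}/N) - f(x)))] converges, uniformly in x over the lattice {k/N : 0 ≤ k ≤ N} \ {1}, to H(x, f'(x)) = f'(x) + c(1-x)(e^{f'(x)} - 1) as N → ∞. -/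
/-!
Write `x = k/N`, `n = N - k - 1`, `p = c/N` and `α = f'(x)`. By Taylor's formula the exponent
`N (f (x + (1+j)/N) - f x)` is `(1+j) α + O((1+j)²/N)`. Replacing it by `(1+j) α` changes the
binomial expectation only by `O(1/N)`: the binomial weights are at most `c^j/j!`, which beats the
`exp (O(j))` size of the terms. Both expectations are at least `exp (-(2c + O(1)))`, so their
logarithms also differ by `O(1/N)`. The linearised expectation is `e^α (1 + p (e^α - 1))^n`, whose
logarithm is `α + (n+1) p (e^α - 1) + O(1/N)`, and `(n+1) p = c (1 - x)`.
-/

open Real Finset Set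

lemma abs_exp_sub_exp_le (a b : ℝ) : |exp a - exp b| ≤ |a - b| * exp (max a b) := by
  wlog hba : b ≤ a generalizing a b
  · simpa [abs_sub_comm, max_comm] using this b a (by linarith)
  have key : exp a - exp b = exp a * (1 - exp (-(a - b))) := by
    rw [mul_sub, ← exp_add]; ring_nf
  rw [abs_of_nonneg (sub_nonneg.2 (exp_le_exp.2 hba)), key, abs_of_nonneg (sub_nonneg.2 hba),
    max_eq_left hba, mul_comm (a - b)]
  exact mul_le_mul_of_nonneg_left (by linarith [add_one_le_exp (-(a - b))]) (exp_pos a).le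

lemma abs_log_sub_log_le {L a b : ℝ} (hL : 0 < L) (ha : L ≤ a) (hb : L ≤ b) :
    |log a - log b| ≤ |a - b| / L := by
  wlog hba : b ≤ a generalizing a b
  · simpa [abs_sub_comm] using this hb ha (by linarith)
  have hb0 : 0 < b := hL.trans_le hb
  have hlog : log a - log b ≤ (a - b) / b := by
    rw [← log_div (by linarith) hb0.ne', sub_div, div_self hb0.ne']
    exact log_le_sub_one_of_pos (div_pos (hb0.trans_le hba) hb0)
  rw [abs_of_nonneg (sub_nonneg.2 (log_le_log hb0 hba)), abs_of_nonneg (sub_nonneg.2 hba)]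
  exact hlog.trans (div_le_div_of_nonneg_left (by linarith) hL hb)

lemma abs_log_one_add_sub_self_le {u : ℝ} (hu : |u| ≤ 1 / 2) : |log (1 + u) - u| ≤ 2 * u ^ 2 := by
  have h := abs_log_sub_add_sum_range_le (x := -u) (by rw [abs_neg]; linarith) 1
  simp only [range_one, sum_singleton, abs_neg, sub_neg_eq_add] at h
  have h2 : |u| ^ 2 / (1 - |u|) ≤ 2 * u ^ 2 := by
    rw [div_le_iff₀ (by linarith), sq_abs]
    nlinarith [sq_nonneg u]
  calc |log (1 + u) - u| = |-u + log (1 + u)| := by ring_nf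
    _ ≤ 2 * u ^ 2 := by simpa using h.trans h2

lemma exp_neg_two_mul_le_one_sub_pow {n : ℕ} {p c : ℝ} (hp0 : 0 ≤ p) (hp : p ≤ 1 / 2)
    (hnp : n * p ≤ c) : exp (-(2 * c)) ≤ (1 - p) ^ n := by
  have hq : 0 < 1 - p := by linarith
  have hlog : -(2 * p) ≤ log (1 - p) := by
    have h := one_sub_inv_le_log_of_pos hq
    have : -(2 * p) ≤ 1 - (1 - p)⁻¹ := by
      rw [inv_eq_one_div, le_sub_iff_add_le, ← le_sub_iff_add_le', div_le_iff₀ hq]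
      nlinarith
    linarith
  rw [← exp_log (pow_pos hq n), log_pow, exp_le_exp]
  nlinarith [Nat.cast_nonneg (α := ℝ) n]

lemma choose_mul_pow_mul_one_sub_pow_le {p : ℝ} (hp0 : 0 ≤ p) (hp1 : p ≤ 1) (n j : ℕ) :
    (n.choose j : ℝ) * p ^ j * (1 - p) ^ (n - j) ≤ (n * p) ^ j / j.factorial := by
  calc (n.choose j : ℝ) * p ^ j * (1 - p) ^ (n - j) ≤ (n ^ j / j.factorial) * p ^ j * 1 := by
        gcongr
        · exact Nat.choose_le_pow_div j n
        · exact pow_le_one₀ (by linarith) (by linarith)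
    _ = (n * p) ^ j / j.factorial := by ring

lemma abs_sub_sub_mul_deriv_le {f : ℝ → ℝ} (hf : ContDiff ℝ 2 f) {a b M : ℝ}
    (hM : ∀ y ∈ Icc a b, |deriv (deriv f) y| ≤ M) {x y : ℝ} (hx : x ∈ Icc a b)
    (hy : y ∈ Icc a b) : |f y - f x - (y - x) * deriv f x| ≤ M * (y - x) ^ 2 := by
  have hf1 : Differentiable ℝ f := hf.differentiable (by norm_num)
  have hf2 : Differentiable ℝ (deriv f) := hf.deriv'.differentiable one_ne_zero
  have hlip : ∀ z ∈ uIcc x y, ‖deriv f z - 1 * deriv f x‖ ≤ M * |y - x| := fun z hz => by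
    have hz' : z ∈ Icc a b := uIcc_subset_Icc hx hy hz
    have h := (convex_Icc a b).norm_image_sub_le_of_norm_deriv_le
      (fun w _ => hf2 w) (fun w hw => by simpa using hM w hw) hx hz'
    rw [one_mul]
    refine h.trans ?_
    gcongr
    · exact (abs_nonneg _).trans (hM x hx)
    · exact abs_sub_left_of_mem_uIcc hz
  have h := (convex_uIcc x y).norm_image_sub_le_of_norm_hasDerivWithin_le
    (fun z _ => ((hf1 z).hasDerivAt.sub ((hasDerivAt_id z).mul_const (deriv f x))).hasDerivWithinAt)
    hlip left_mem_uIcc right_mem_uIcc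
  simp only [Pi.sub_apply, id, Real.norm_eq_abs] at h
  rw [← sq_abs, sq, ← mul_assoc]
  convert h using 2
  ring

/-- `𝔼[exp (g ζ)]` for `ζ` binomial with parameters `n` and `p`. -/
noncomputable def binomialExpSum (n : ℕ) (p : ℝ) (g : ℕ → ℝ) : ℝ :=
  ∑ j ∈ range (n + 1), (n.choose j : ℝ) * p ^ j * (1 - p) ^ (n - j) * exp (g j)

lemma binomialExpSum_affine (n : ℕ) (p a b : ℝ) :
    binomialExpSum n p (fun j => a + j * b) = exp a * (1 - p + p * exp b) ^ n := by
  rw [binomialExpSum, add_comm (1 - p), add_pow, mul_sum]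
  refine sum_congr rfl fun j _ => ?_
  rw [exp_add, exp_nat_mul, mul_pow]
  ring

lemma exp_neg_le_binomialExpSum {n : ℕ} {p c K : ℝ} {g : ℕ → ℝ} (hp0 : 0 ≤ p) (hp : p ≤ 1 / 2)
    (hnp : n * p ≤ c) (hg : -K ≤ g 0) : exp (-(2 * c + K)) ≤ binomialExpSum n p g := by
  have hq : 0 ≤ 1 - p := by linarith
  have h0 : (1 - p) ^ n * exp (g 0) ≤ binomialExpSum n p g := by
    rw [binomialExpSum]
    simpa using single_le_sum (f := fun j => (n.choose j : ℝ) * p ^ j * (1 - p) ^ (n - j) *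
      exp (g j)) (fun j _ => by positivity) (mem_range.2 n.succ_pos)
  calc exp (-(2 * c + K)) = exp (-(2 * c)) * exp (-K) := by rw [← exp_add]; ring_nf
    _ ≤ (1 - p) ^ n * exp (g 0) := by
        gcongr
        exact exp_neg_two_mul_le_one_sub_pow hp0 hp hnp
    _ ≤ binomialExpSum n p g := h0

lemma abs_exp_sub_exp_le_of_abs_sub_le_sq {a b t K M N : ℝ} (hM : 0 ≤ M) (ht : 0 ≤ t)
    (htN : t ≤ N) (hb : b ≤ K * t) (hab : |a - b| ≤ M * t ^ 2 / N) :
    |exp a - exp b| ≤ M / N * exp ((K + M + 2) * t) := by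
  rcases ht.eq_or_lt with rfl | ht
  · rw [zero_pow two_ne_zero, mul_zero, zero_div, abs_nonpos_iff, sub_eq_zero] at hab
    rw [hab, sub_self, abs_zero]
    exact mul_nonneg (div_nonneg hM htN) (exp_pos _).le
  have hN : 0 < N := ht.trans_le htN
  have hab' : |a - b| ≤ M * t := hab.trans (by rw [div_le_iff₀ hN, sq, ← mul_assoc]; gcongr)
  have hmax : max a b ≤ (K + M) * t :=
    max_le (by linarith [le_abs_self (a - b)]) (by nlinarith)
  have hsq : t ^ 2 ≤ exp (2 * t) := by
    rw [two_mul, exp_add, sq]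
    exact mul_self_le_mul_self ht.le (by linarith [add_one_le_exp t])
  calc |exp a - exp b| ≤ |a - b| * exp (max a b) := abs_exp_sub_exp_le a b
    _ ≤ M * t ^ 2 / N * exp ((K + M) * t) := by gcongr
    _ ≤ M * exp (2 * t) / N * exp ((K + M) * t) := by gcongr
    _ = M / N * exp ((K + M + 2) * t) := by
        rw [mul_div_right_comm, mul_assoc, ← exp_add]
        ring_nf

lemma abs_binomialExpSum_sub_le {n : ℕ} {p c K M N : ℝ} {g h : ℕ → ℝ} (hp0 : 0 ≤ p)
    (hp1 : p ≤ 1) (hnp : n * p ≤ c) (hnN : n + 1 ≤ N) (hM : 0 ≤ M)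
    (hh : ∀ j ≤ n, h j ≤ K * (1 + j)) (hgh : ∀ j ≤ n, |g j - h j| ≤ M * (1 + j) ^ 2 / N) :
    |binomialExpSum n p g - binomialExpSum n p h|
      ≤ M / N * exp (K + M + 2) * exp (c * exp (K + M + 2)) := by
  set E := exp (K + M + 2)
  have hc : 0 ≤ c := (mul_nonneg n.cast_nonneg hp0).trans hnp
  have hterm : ∀ j ∈ range (n + 1),
      |(n.choose j : ℝ) * p ^ j * (1 - p) ^ (n - j) * exp (g j)
        - (n.choose j : ℝ) * p ^ j * (1 - p) ^ (n - j) * exp (h j)|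
        ≤ M / N * E * ((c * E) ^ j / j.factorial) := by
    intro j hj
    have hjn : j ≤ n := Nat.lt_succ_iff.1 (mem_range.1 hj)
    have hjN : 1 + (j : ℝ) ≤ N := by linarith [(Nat.cast_le (α := ℝ)).2 hjn]
    have hw0 : 0 ≤ (n.choose j : ℝ) * p ^ j * (1 - p) ^ (n - j) := by
      have : 0 ≤ 1 - p := by linarith
      positivity
    have hw : (n.choose j : ℝ) * p ^ j * (1 - p) ^ (n - j) ≤ c ^ j / j.factorial :=
      (choose_mul_pow_mul_one_sub_pow_le hp0 hp1 n j).trans (by gcongr)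
    have hE : exp ((K + M + 2) * (1 + j)) = E * E ^ j := by
      rw [← exp_nat_mul, ← exp_add]
      ring_nf
    calc _ = (n.choose j : ℝ) * p ^ j * (1 - p) ^ (n - j) * |exp (g j) - exp (h j)| := by
          rw [← mul_sub, abs_mul, abs_of_nonneg hw0]
      _ ≤ c ^ j / j.factorial * (M / N * exp ((K + M + 2) * (1 + j))) :=
          mul_le_mul hw (abs_exp_sub_exp_le_of_abs_sub_le_sq hM (by positivity) hjN (hh j hjn)
            (hgh j hjn)) (abs_nonneg _) (by positivity)
      _ = M / N * E * ((c * E) ^ j / j.factorial) := by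
          rw [hE]
          ring
  calc |binomialExpSum n p g - binomialExpSum n p h|
      ≤ ∑ j ∈ range (n + 1), M / N * E * ((c * E) ^ j / j.factorial) := by
        rw [binomialExpSum, binomialExpSum, ← sum_sub_distrib]
        exact (abs_sum_le_sum_abs _ _).trans (sum_le_sum hterm)
    _ ≤ M / N * E * exp (c * E) := by
        rw [← mul_sum]
        have hN : 0 ≤ N := by linarith [n.cast_nonneg (α := ℝ)]
        exact mul_le_mul_of_nonneg_left (sum_le_exp_of_nonneg (by positivity) _)
          (mul_nonneg (div_nonneg hM hN) (exp_pos _).le)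

lemma abs_log_binomialExpSum_affine_sub_le (n : ℕ) {p a b δ : ℝ}
    (hu : |p * (exp b - 1)| ≤ δ) (hδ : δ ≤ 1 / 2) :
    |log (binomialExpSum n p fun j => a + j * b) - (a + (n + 1) * (p * (exp b - 1)))|
      ≤ 2 * n * δ ^ 2 + δ := by
  set u := p * (exp b - 1)
  have hq : 1 - p + p * exp b = 1 + u := by ring
  have hu1 : 0 < 1 + u := by linarith [neg_abs_le u]
  have hu2 : u ^ 2 ≤ δ ^ 2 := by
    rw [← sq_abs]
    exact pow_le_pow_left₀ (abs_nonneg u) hu 2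
  rw [binomialExpSum_affine, hq, log_mul (exp_ne_zero a) (pow_ne_zero _ hu1.ne'), log_exp, log_pow]
  calc |a + n * log (1 + u) - (a + (n + 1) * u)| = |n * (log (1 + u) - u) - u| := by ring_nf
    _ ≤ n * |log (1 + u) - u| + |u| := by
        refine (abs_sub _ _).trans_eq ?_
        rw [abs_mul, Nat.abs_cast]
    _ ≤ n * (2 * δ ^ 2) + δ := by
        gcongr
        exact (abs_log_one_add_sub_self_le (hu.trans hδ)).trans (by linarith)
    _ = 2 * n * δ ^ 2 + δ := by ring

lemma abs_log_binomialExpSum_sub_le {n : ℕ} {p c K M N : ℝ} {g h : ℕ → ℝ} (hp0 : 0 ≤ p)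
    (hp : p ≤ 1 / 2) (hnp : n * p ≤ c) (hnN : n + 1 ≤ N) (hM : 0 ≤ M)
    (hh : ∀ j ≤ n, |h j| ≤ K * (1 + j)) (hgh : ∀ j ≤ n, |g j - h j| ≤ M * (1 + j) ^ 2 / N) :
    |log (binomialExpSum n p g) - log (binomialExpSum n p h)|
      ≤ M / N * (exp (K + M + 2) * exp (c * exp (K + M + 2)) * exp (2 * c + (K + M))) := by
  have hN1 : 1 ≤ N := by linarith [n.cast_nonneg (α := ℝ)]
  have hh0 : -K ≤ h 0 := by simpa using (neg_abs_le (h 0)).trans' (neg_le_neg (hh 0 n.zero_le))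
  have hgh0 : |g 0 - h 0| ≤ M := by
    have h0 := hgh 0 n.zero_le
    rw [Nat.cast_zero, add_zero, one_pow, mul_one] at h0
    exact h0.trans (div_le_self hM hN1)
  have hSh := exp_neg_le_binomialExpSum hp0 hp hnp (show -(K + M) ≤ h 0 by linarith)
  have hSg := exp_neg_le_binomialExpSum hp0 hp hnp
    (show -(K + M) ≤ g 0 by linarith [neg_abs_le (g 0 - h 0)])
  calc _ ≤ |binomialExpSum n p g - binomialExpSum n p h| / exp (-(2 * c + (K + M))) :=
        abs_log_sub_log_le (exp_pos _) hSg hSh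
    _ = |binomialExpSum n p g - binomialExpSum n p h| * exp (2 * c + (K + M)) := by
        rw [exp_neg, div_inv_eq_mul]
    _ ≤ M / N * exp (K + M + 2) * exp (c * exp (K + M + 2)) * exp (2 * c + (K + M)) := by
        gcongr
        exact abs_binomialExpSum_sub_le hp0 (by linarith) hnp hnN hM
          (fun j hj => (le_abs_self _).trans (hh j hj)) hgh
    _ = _ := by ring

lemma abs_mul_sub_sub_mul_deriv_le {f : ℝ → ℝ} (hf : ContDiff ℝ 2 f) {a b M N x t : ℝ}
    (hM : ∀ y ∈ Icc a b, |deriv (deriv f) y| ≤ M) (hN : 0 < N) (hx : x ∈ Icc a b)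
    (hxt : x + t / N ∈ Icc a b) :
    |N * (f (x + t / N) - f x) - t * deriv f x| ≤ M * t ^ 2 / N := by
  have h := abs_sub_sub_mul_deriv_le hf hM hx hxt
  rw [add_sub_cancel_left] at h
  calc _ = N * |f (x + t / N) - f x - t / N * deriv f x| := by
        rw [← abs_of_pos hN, ← abs_mul, abs_of_pos hN]
        congr 1
        field_simp
    _ ≤ N * (M * (t / N) ^ 2) := by gcongr
    _ = M * t ^ 2 / N := by field_simp

lemma abs_log_binomialExpSum_sub_le_of_bounds {c A M N x : ℝ} {n : ℕ} {f : ℝ → ℝ}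
    (hc : 0 ≤ c) (hf : ContDiff ℝ 2 f) (hA : ∀ y ∈ Icc x 1, |deriv f y| ≤ A)
    (hM : ∀ y ∈ Icc x 1, |deriv (deriv f) y| ≤ M) (hN : 2 * c * (exp A + 1) + 1 ≤ N)
    (hx : 0 ≤ x) (hxn : x + (n + 1) / N = 1) :
    |log (binomialExpSum n (c / N) fun j => N * (f (x + (1 + j) / N) - f x))
        - (deriv f x + c * (1 - x) * (exp (deriv f x) - 1))|
      ≤ (M * (exp (A + M + 2) * exp (c * exp (A + M + 2)) * exp (2 * c + (A + M)))
        + (2 * (c * (exp A + 1)) ^ 2 + c * (exp A + 1))) / N := by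
  set B := exp A + 1
  set α := deriv f x
  have hNpos : 0 < N := by linarith [show 0 ≤ 2 * c * B by positivity]
  have hx1 : x ∈ Icc x 1 :=
    ⟨le_rfl, by linarith [show 0 ≤ ((n : ℝ) + 1) / N from div_nonneg (by positivity) hNpos.le]⟩
  have hαA : |α| ≤ A := hA x hx1
  have hA0 : 0 ≤ A := (abs_nonneg _).trans hαA
  have hM0 : 0 ≤ M := (abs_nonneg _).trans (hM x hx1)
  have hnN : (n : ℝ) + 1 ≤ N := by
    rw [← div_le_one hNpos]; linarith
  have hp : c / N ≤ 1 / 2 := by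
    rw [div_le_iff₀ hNpos]; nlinarith [one_le_exp hA0]
  have hnp : n * (c / N) ≤ c := by
    rw [mul_div_assoc', div_le_iff₀ hNpos]; nlinarith
  have hu : |c / N * (exp α - 1)| ≤ c * B / N := by
    rw [abs_mul, abs_of_nonneg (by positivity), div_mul_eq_mul_div]
    gcongr
    refine (abs_sub _ _).trans ?_
    rw [abs_one, abs_of_pos (exp_pos α)]
    linarith [exp_le_exp.2 ((le_abs_self α).trans hαA)]
  have hh : ∀ j ≤ n, |α + j * α| ≤ A * (1 + j) := fun j _ => by
    rw [show α + j * α = (1 + j) * α by ring, abs_mul, abs_of_nonneg (by positivity)]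
    nlinarith [mul_le_mul_of_nonneg_left hαA (by positivity : (0 : ℝ) ≤ 1 + j)]
  have hgh : ∀ j ≤ n, |N * (f (x + (1 + j) / N) - f x) - (α + j * α)| ≤ M * (1 + j) ^ 2 / N :=
    fun j hj => by
    have hjN : (1 + j) / N ≤ (n + 1) / N :=
      div_le_div_of_nonneg_right (by simpa [add_comm] using hj) hNpos.le
    rw [show α + j * α = (1 + j) * α by ring]
    exact abs_mul_sub_sub_mul_deriv_le hf hM hNpos hx1
      ⟨by linarith [show 0 ≤ (1 + j) / N by positivity], by linarith⟩
  have hlog := abs_log_binomialExpSum_sub_le (div_nonneg hc hNpos.le) hp hnp hnN hM0 hh hgh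
  have hlin := abs_log_binomialExpSum_affine_sub_le n (a := α) hu
    (by rw [div_le_iff₀ hNpos]; linarith)
  have htarget : α + c * (1 - x) * (exp α - 1) = α + (n + 1) * (c / N * (exp α - 1)) := by
    rw [show 1 - x = (n + 1) / N by linarith]; ring
  calc _ ≤ _ := abs_sub_le _ (log (binomialExpSum n (c / N) fun j => α + j * α)) _
    _ ≤ _ := add_le_add hlog (htarget ▸ hlin)
    _ ≤ M / N * (exp (A + M + 2) * exp (c * exp (A + M + 2)) * exp (2 * c + (A + M)))
        + (2 * N * (c * B / N) ^ 2 + c * B / N) := by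
        gcongr
        linarith
    _ = _ := by field_simp

lemma exists_abs_log_binomialExpSum_sub_le {c : ℝ} (hc : 0 ≤ c) {f : ℝ → ℝ}
    (hf : ContDiff ℝ 2 f) :
    ∃ C N₁ : ℝ, 0 < N₁ ∧ ∀ ⦃N x : ℝ⦄ ⦃n : ℕ⦄, N₁ ≤ N → 0 ≤ x → x + (n + 1) / N = 1 →
      |log (binomialExpSum n (c / N) fun j => N * (f (x + (1 + j) / N) - f x))
        - (deriv f x + c * (1 - x) * (exp (deriv f x) - 1))| ≤ C / N := by
  have hf' : ContDiff ℝ 1 (deriv f) := hf.deriv'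
  obtain ⟨A, hA⟩ := (isCompact_Icc (a := (0 : ℝ)) (b := 1)).exists_bound_of_continuousOn
    hf'.continuous.continuousOn
  obtain ⟨M, hM⟩ := (isCompact_Icc (a := (0 : ℝ)) (b := 1)).exists_bound_of_continuousOn
    hf'.continuous_deriv_one.continuousOn
  simp only [Real.norm_eq_abs] at hA hM
  have hA0 : 0 ≤ A := (abs_nonneg _).trans (hA 0 (left_mem_Icc.2 zero_le_one))
  exact ⟨_, _, by positivity, fun N x n hN hx hxn =>
    abs_log_binomialExpSum_sub_le_of_bounds hc hf (fun y hy => hA y ⟨hx.trans hy.1, hy.2⟩)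
      (fun y hy => hM y ⟨hx.trans hy.1, hy.2⟩) hN hx hxn⟩

theorem generator_uniform_convergence (c : ℝ) (hc : 0 < c)
    (f : ℝ → ℝ) (hf : ContDiff ℝ 2 f) :
    ∀ ε > 0, ∃ N₀ : ℕ, ∀ N : ℕ, N₀ ≤ N → c < N →
      ∀ k : ℕ, k < N →
        |Real.log (∑ j ∈ Finset.range (N - k),
            ((N - k - 1).choose j : ℝ) * (c / N) ^ j * (1 - c / N) ^ (N - k - 1 - j)
              * Real.exp ((N : ℝ) * (f ((k : ℝ) / N + (1 + (j : ℝ)) / N) - f ((k : ℝ) / N))))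
          - (deriv f ((k : ℝ) / N)
              + c * (1 - (k : ℝ) / N) * (Real.exp (deriv f ((k : ℝ) / N)) - 1))| < ε := by
  intro ε hε
  obtain ⟨C, N₁, hN₁, hC⟩ := exists_abs_log_binomialExpSum_sub_le hc.le hf
  obtain ⟨N₀, hN₀⟩ := exists_nat_gt (max N₁ (C / ε))
  refine ⟨N₀, fun N hN _ k hk => ?_⟩
  have hNmax : max N₁ (C / ε) < N := hN₀.trans_le (by exact_mod_cast hN)
  have hNpos : (0 : ℝ) < N := hN₁.trans ((le_max_left _ _).trans_lt hNmax)
  obtain ⟨n, hn⟩ : ∃ n, N - k = n + 1 := ⟨N - k - 1, by omega⟩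
  have hxn : (k : ℝ) / N + (n + 1) / N = 1 := by
    rw [← add_div, div_eq_one_iff_eq hNpos.ne']
    exact_mod_cast (by omega : k + (n + 1) = N)
  rw [hn, Nat.add_sub_cancel]
  calc _ ≤ C / N := hC ((le_max_left _ _).trans hNmax.le) (by positivity) hxn
    _ < ε := by
      rw [div_lt_iff₀ hNpos, mul_comm]
      exact (div_lt_iff₀ hε).1 ((le_max_right _ _).trans_lt hNmax)
end
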